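/- Let N ≥ 1, α, β > −1, and let z_1 < ... < z_N be the ordered zeros of the Jacobi polynomial P_N^{(α,β)}. Let S̃ be the N×N matrix with entries s̃_{j,j} = 4Σ_{l≠j}(1−z_j²)/(z_j−z_l)² + 2(α+1)(1+z_j)/(1−z_j) + 2(β+1)(1−z_j)/(1+z_j) and s̃_{i,j} = −4√((1−z_i²)(1−z_j²))/(z_i−z_j)² for i ≠ j. Then for every k = 2, ..., N there exists a real polynomial p_k of degree at most k−2 such that the vector v_k = (z_1^{k−1}√(1−z_1²), ..., z_N^{k−1}√(1−z_N²))^T satisfies (S̃ v_k)_i = (2k(2N+α+β+1−k)·z_i^{k−1} + p_k(z_i))·√(1−z_i²) for all i = 1, ..., N. -/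

import Mathlib

/-!
Write `L = (1 - x²) d²/dx² + (β - α - (α + β + 2) x) d/dx`. Integrating by parts against the weight
`(1 - x)^α (1 + x)^β` shows that `L` is symmetric; since it does not raise degrees,
`L P + N (N + α + β + 1) P` has degree `< N` and is orthogonal to itself, so `P` solves the Jacobi
equation. At a simple root `z_i` one has `P'' = 2 P' ∑_{j ≠ i} 1 / (z_i - z_j)`, and the equation
becomes the Stieltjes relation `2 (1 - z_i²) ∑_{j ≠ i} 1 / (z_i - z_j) = α - β + (α + β + 2) z_i`.

With `f t = (1 - t²) t^(k-1)`, the `i`-th entry of `S̃ v_k` is `√(1 - z_i²)` times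
`4 ∑_{j ≠ i} (f z_i - f z_j) / (z_i - z_j)²` plus the boundary terms of the diagonal. Splitting
`(f x - f y) / (x - y)² = f' x / (x - y) - f[x, x, y]`, the Stieltjes relation turns the poles
`f' z_i / (z_i - z_j)` together with the boundary terms into a polynomial in `z_i`, and the
second divided differences `f[x, x, y]` are polynomials in `x` of degree `k - 1` with leading
coefficient `-k`: summing them over the nodes produces the `N`-dependence of the eigenvalue.
-/

open MeasureTheory Filter Real Finset Topology Polynomial

noncomputable section

variable {α β : ℝ}

theorem intervalIntegrable_jacobiWeight (hα : -1 < α) (hβ : -1 < β) :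
    IntervalIntegrable (fun x : ℝ => (1 - x) ^ α * (1 + x) ^ β) volume (-1) 1 := by
  have hleft : IntervalIntegrable (fun x : ℝ => (1 - x) ^ α * (1 + x) ^ β) volume (-1) 0 := by
    have h : IntervalIntegrable (fun x : ℝ => (1 + x) ^ β) volume (-1) 0 := by
      simpa using (intervalIntegral.intervalIntegrable_rpow' (a := 0) (b := 1) hβ).comp_add_left 1
    refine h.continuousOn_mul (ContinuousOn.rpow_const (by fun_prop) fun x hx => Or.inl ?_)
    rw [Set.uIcc_of_le (by norm_num)] at hx
    linarith [hx.2]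
  have hright : IntervalIntegrable (fun x : ℝ => (1 - x) ^ α * (1 + x) ^ β) volume 0 1 := by
    have h : IntervalIntegrable (fun x : ℝ => (1 - x) ^ α) volume 0 1 := by
      simpa using
        ((intervalIntegral.intervalIntegrable_rpow' (a := 0) (b := 1) hα).comp_sub_left 1).symm
    refine h.mul_continuousOn (ContinuousOn.rpow_const (by fun_prop) fun x hx => Or.inl ?_)
    rw [Set.uIcc_of_le (by norm_num)] at hx
    linarith [hx.1]
  exact hleft.trans hright

def jacobiInner (α β : ℝ) (A B : ℝ[X]) : ℝ :=
  ∫ x in Set.Ioo (-1 : ℝ) 1, A.eval x * B.eval x * (1 - x) ^ α * (1 + x) ^ β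

theorem integrableOn_jacobiInner_integrand (hα : -1 < α) (hβ : -1 < β) (A B : ℝ[X]) :
    IntegrableOn (fun x => A.eval x * B.eval x * (1 - x) ^ α * (1 + x) ^ β)
      (Set.Ioo (-1) 1) := by
  have h := ((intervalIntegrable_jacobiWeight hα hβ).continuousOn_mul
    (g := fun x => A.eval x * B.eval x) (by fun_prop))
  rw [intervalIntegrable_iff_integrableOn_Ioo_of_le (by norm_num)] at h
  simpa only [mul_assoc] using h

theorem jacobiInner_comm (A B : ℝ[X]) : jacobiInner α β A B = jacobiInner α β B A := by
  simp only [jacobiInner, mul_comm (A.eval _)]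

theorem jacobiInner_add_left (hα : -1 < α) (hβ : -1 < β) (A B Q : ℝ[X]) :
    jacobiInner α β (A + B) Q = jacobiInner α β A Q + jacobiInner α β B Q := by
  simp only [jacobiInner, eval_add, add_mul]
  exact integral_add (integrableOn_jacobiInner_integrand hα hβ A Q)
    (integrableOn_jacobiInner_integrand hα hβ B Q)

theorem jacobiInner_C_mul_left (c : ℝ) (A Q : ℝ[X]) :
    jacobiInner α β (C c * A) Q = c * jacobiInner α β A Q := by
  simp only [jacobiInner, eval_mul, eval_C, mul_assoc]
  exact integral_const_mul c _

theorem eq_zero_of_jacobiInner_self_eq_zero (hα : -1 < α) (hβ : -1 < β) {A : ℝ[X]}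
    (h : jacobiInner α β A A = 0) : A = 0 := by
  have hw : ∀ x ∈ Set.Ioo (-1 : ℝ) 1, 0 < (1 - x) ^ α * (1 + x) ^ β := fun x hx =>
    mul_pos (rpow_pos_of_pos (by linarith [hx.2]) α) (rpow_pos_of_pos (by linarith [hx.1]) β)
  have hnonneg : 0 ≤ᵐ[volume.restrict (Set.Ioo (-1 : ℝ) 1)]
      fun x => A.eval x * A.eval x * (1 - x) ^ α * (1 + x) ^ β := by
    filter_upwards [ae_restrict_mem measurableSet_Ioo] with x hx
    simpa only [Pi.zero_apply, mul_assoc] using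
      mul_nonneg (mul_self_nonneg (A.eval x)) (hw x hx).le
  have hae := (setIntegral_eq_zero_iff_of_nonneg_ae hnonneg
    (integrableOn_jacobiInner_integrand hα hβ A A)).mp h
  have hcont : ContinuousOn (fun x => A.eval x * A.eval x * (1 - x) ^ α * (1 + x) ^ β)
      (Set.Ioo (-1) 1) :=
    ((A.continuous.mul A.continuous).continuousOn.mul
      (ContinuousOn.rpow_const (by fun_prop) fun x hx => Or.inl (by linarith [hx.2]))).mul
      (ContinuousOn.rpow_const (by fun_prop) fun x hx => Or.inl (by linarith [hx.1]))
  have hzero := Measure.eqOn_Ioo_of_ae_eq volume hae hcont continuousOn_const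
  refine eq_zero_of_infinite_isRoot A ((Set.Ioo_infinite (by norm_num : (-1 : ℝ) < 1)).mono
    fun x hx => ?_)
  have := hzero hx
  simp only [Pi.zero_apply, mul_assoc] at this
  simpa [(hw x hx).ne'] using this

def jacobiOp (α β : ℝ) (A : ℝ[X]) : ℝ[X] :=
  (1 - X ^ 2) * derivative (derivative A) + (C (β - α) - C (α + β + 2) * X) * derivative A

theorem hasDerivAt_weight_succ_mul_derivative_mul (A B : ℝ[X]) {x : ℝ}
    (hx : x ∈ Set.Ioo (-1 : ℝ) 1) :
    HasDerivAt
      (fun y => (1 - y) ^ (α + 1) * (1 + y) ^ (β + 1) * ((derivative A).eval y * B.eval y))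
      ((jacobiOp α β A).eval x * B.eval x * (1 - x) ^ α * (1 + x) ^ β +
        ((1 - X ^ 2) * derivative A).eval x * (derivative B).eval x * (1 - x) ^ α * (1 + x) ^ β)
      x := by
  have h1 : 1 - x ≠ 0 := by linarith [hx.2]
  have h2 : 1 + x ≠ 0 := by linarith [hx.1]
  have hu := ((hasDerivAt_id x).const_sub 1).rpow_const (p := α + 1) (Or.inl h1)
  have hv := ((hasDerivAt_id x).const_add 1).rpow_const (p := β + 1) (Or.inl h2)
  have hAB := (derivative A).hasDerivAt x |>.mul (B.hasDerivAt x)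
  refine ((hu.mul hv).mul hAB).congr_deriv ?_
  simp only [jacobiOp, add_sub_cancel_right, Pi.mul_apply, rpow_add_one h1, rpow_add_one h2, id,
    eval_add, eval_mul, eval_sub, eval_one, eval_pow, eval_X, eval_C]
  ring

theorem jacobiInner_jacobiOp_left (hα : -1 < α) (hβ : -1 < β) (A B : ℝ[X]) :
    jacobiInner α β (jacobiOp α β A) B =
      -jacobiInner α β ((1 - X ^ 2) * derivative A) (derivative B) := by
  set F : ℝ → ℝ :=
    fun y => (1 - y) ^ (α + 1) * (1 + y) ^ (β + 1) * ((derivative A).eval y * B.eval y)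
  have hF : ContinuousOn F (Set.Icc (-1) 1) :=
    ((ContinuousOn.rpow_const (by fun_prop) fun x _ => Or.inr (by linarith)).mul
      (ContinuousOn.rpow_const (by fun_prop) fun x _ => Or.inr (by linarith))).mul
      (by fun_prop)
  have hint₁ := integrableOn_jacobiInner_integrand hα hβ (jacobiOp α β A) B
  have hint₂ :=
    integrableOn_jacobiInner_integrand hα hβ ((1 - X ^ 2) * derivative A) (derivative B)
  have hFTC := intervalIntegral.integral_eq_sub_of_hasDeriv_right_of_le (by norm_num) hF
    (fun x hx => (hasDerivAt_weight_succ_mul_derivative_mul A B hx).hasDerivWithinAt)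
    ((intervalIntegrable_iff_integrableOn_Ioo_of_le (by norm_num)).mpr (hint₁.add hint₂))
  have hF1 : F 1 = 0 := by simp [F, zero_rpow (by linarith : α + 1 ≠ 0)]
  have hF2 : F (-1) = 0 := by simp [F, zero_rpow (by linarith : β + 1 ≠ 0)]
  rw [hF1, hF2, sub_zero, intervalIntegral.integral_of_le (by norm_num),
    integral_Ioc_eq_integral_Ioo, integral_add hint₁ hint₂] at hFTC
  rw [jacobiInner, jacobiInner]
  linarith

theorem coeff_jacobiOp (A : ℝ[X]) (n : ℕ) :
    (jacobiOp α β A).coeff n =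
      (n + 1) * (n + 2) * A.coeff (n + 2) + (β - α) * (n + 1) * A.coeff (n + 1) -
        n * (n + α + β + 1) * A.coeff n := by
  rcases n with _ | _ | n <;>
    simp [jacobiOp, sub_mul, add_mul, mul_assoc, coeff_derivative, coeff_X_pow_mul', coeff_X_mul,
      coeff_C_mul] <;> ring

theorem natDegree_jacobiOp_le (A : ℝ[X]) : (jacobiOp α β A).natDegree ≤ A.natDegree :=
  natDegree_le_iff_coeff_eq_zero.mpr fun m hm => by
    simp [coeff_jacobiOp, coeff_eq_zero_of_natDegree_lt, hm, hm.trans (Nat.lt_succ_self m),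
      hm.trans (by omega : m < m + 2)]

theorem jacobiInner_jacobiOp_comm (hα : -1 < α) (hβ : -1 < β) (A B : ℝ[X]) :
    jacobiInner α β (jacobiOp α β A) B = jacobiInner α β (jacobiOp α β B) A := by
  rw [jacobiInner_jacobiOp_left hα hβ, jacobiInner_jacobiOp_left hα hβ, jacobiInner, jacobiInner]
  congr 2 with x
  simp only [eval_mul]
  ring

theorem jacobiOp_add_C_mul_eq_zero (hα : -1 < α) (hβ : -1 < β) {N : ℕ} {P : ℝ[X]}
    (hPdeg : P.natDegree ≤ N) (hPorth : ∀ Q : ℝ[X], Q.natDegree < N → jacobiInner α β P Q = 0) :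
    jacobiOp α β P + C (N * (N + α + β + 1)) * P = 0 := by
  set R := jacobiOp α β P + C (N * (N + α + β + 1)) * P
  have hRorth (Q : ℝ[X]) (hQ : Q.natDegree < N) : jacobiInner α β R Q = 0 := by
    rw [jacobiInner_add_left hα hβ, jacobiInner_C_mul_left, jacobiInner_jacobiOp_comm hα hβ,
      jacobiInner_comm, hPorth Q hQ, hPorth _ ((natDegree_jacobiOp_le Q).trans_lt hQ)]
    ring
  have hRdeg : R.degree < N := by
    refine (degree_lt_iff_coeff_zero R N).mpr fun m hm => ?_
    have hcoeff (n : ℕ) (hn : N < n) : P.coeff n = 0 := coeff_eq_zero_of_natDegree_lt (by omega)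
    have htop : ((N : ℝ) * (N + α + β + 1) - m * (m + α + β + 1)) * P.coeff m = 0 := by
      rcases hm.eq_or_lt with rfl | hlt
      · ring
      · rw [hcoeff m hlt, mul_zero]
    simp only [R, coeff_add, coeff_C_mul, coeff_jacobiOp, hcoeff (m + 1) (by omega),
      hcoeff (m + 2) (by omega)]
    linear_combination htop
  by_contra hR
  exact hR (eq_zero_of_jacobiInner_self_eq_zero hα hβ
    (hRorth R ((natDegree_lt_iff_degree_lt hR).mpr hRdeg)))

section Nodal

open Lagrange

variable {K ι : Type*} [Field K] {s : Finset ι} {v : ι → K}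

theorem eq_C_leadingCoeff_mul_nodal [Fintype ι] {P : K[X]} (hv : Function.Injective v)
    (hroot : ∀ i, P.IsRoot (v i)) (hdeg : P.natDegree ≤ Fintype.card ι) :
    P = C P.leadingCoeff * nodal univ v :=
  eq_leadingCoeff_mul_of_monic_of_dvd_of_natDegree_le nodal_monic
    (Finset.prod_dvd_of_coprime ((pairwise_coprime_X_sub_C hv).set_pairwise _)
      fun i _ => dvd_iff_isRoot.mpr (hroot i))
    (by rwa [natDegree_nodal, card_univ])

variable [DecidableEq ι]

theorem eval_derivative_nodal_eq_mul_sum_inv {x : K} (hx : ∀ j ∈ s, x ≠ v j) :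
    (derivative (nodal s v)).eval x = (nodal s v).eval x * ∑ j ∈ s, (x - v j)⁻¹ := by
  rw [derivative_nodal, eval_finsetSum, mul_sum]
  refine sum_congr rfl fun j hj => ?_
  rw [nodal_eq_mul_nodal_erase hj, eval_mul, eval_sub, eval_X, eval_C,
    mul_comm (x - v j), mul_assoc, mul_inv_cancel₀ (sub_ne_zero.mpr (hx j hj)), mul_one]

theorem eval_derivative_derivative_nodal (hv : Set.InjOn v s) {i : ι} (hi : i ∈ s) :
    (derivative (derivative (nodal s v))).eval (v i) =
      2 * (derivative (nodal s v)).eval (v i) * ∑ j ∈ s.erase i, (v i - v j)⁻¹ := by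
  have hne : ∀ j ∈ s.erase i, v i ≠ v j := fun j hj h =>
    (ne_of_mem_erase hj) (hv (mem_of_mem_erase hj) hi h.symm)
  rw [eval_nodal_derivative_eval_node_eq hi, mul_assoc,
    ← eval_derivative_nodal_eq_mul_sum_inv hne, nodal_eq_mul_nodal_erase hi]
  simp only [derivative_mul, derivative_add, derivative_sub, derivative_X, derivative_C,
    sub_zero, one_mul, zero_mul, eval_add, eval_mul, eval_sub, eval_X, eval_C, sub_self]
  ring

theorem two_mul_sum_inv_sub_add_eq_zero (hv : Set.InjOn v s) {i : ι} (hi : i ∈ s)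
    {a b c : K} (hc : c ≠ 0)
    (hode : a * (derivative (derivative (C c * nodal s v))).eval (v i) +
      b * (derivative (C c * nodal s v)).eval (v i) = 0) :
    2 * a * ∑ j ∈ s.erase i, (v i - v j)⁻¹ + b = 0 := by
  have hd : (derivative (nodal s v)).eval (v i) ≠ 0 := by
    rw [eval_nodal_derivative_eval_node_eq hi]
    exact eval_nodal_not_at_node fun j hj h =>
      (ne_of_mem_erase hj) (hv (mem_of_mem_erase hj) hi h.symm)
  simp only [derivative_C_mul, eval_mul, eval_C, eval_derivative_derivative_nodal hv hi] at hode
  have : c * (derivative (nodal s v)).eval (v i) *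
      (2 * a * ∑ j ∈ s.erase i, (v i - v j)⁻¹ + b) = 0 := by
    linear_combination hode
  simpa [hc, hd] using this

end Nodal

theorem jacobi_stieltjes_relation (hα : -1 < α) (hβ : -1 < β) {N : ℕ} {P : ℝ[X]}
    (hPdeg : P.natDegree = N) (hPorth : ∀ Q : ℝ[X], Q.natDegree < N → jacobiInner α β P Q = 0)
    {z : Fin N → ℝ} (hz : Function.Injective z) (hroot : ∀ i, P.eval (z i) = 0) (i : Fin N) :
    2 * (1 - z i ^ 2) * ∑ j ∈ univ.erase i, (z i - z j)⁻¹ = α - β + (α + β + 2) * z i := by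
  have hP : P ≠ 0 := by
    rintro rfl
    obtain rfl : N = 0 := by simp [← hPdeg]
    exact i.elim0
  have hfactor := eq_C_leadingCoeff_mul_nodal hz hroot (by rw [hPdeg, Fintype.card_fin])
  have hode := congrArg (eval (z i)) (jacobiOp_add_C_mul_eq_zero hα hβ hPdeg.le hPorth)
  simp only [jacobiOp, eval_add, eval_mul, eval_sub, eval_one, eval_pow, eval_X, eval_C,
    hroot i, mul_zero, add_zero, eval_zero] at hode
  have := two_mul_sum_inv_sub_add_eq_zero (s := univ) hz.injOn (mem_univ i)
    (a := 1 - z i ^ 2) (b := β - α - (α + β + 2) * z i) (leadingCoeff_ne_zero.mpr hP)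
    (by rw [← hfactor]; linear_combination hode)
  linarith

/-- The second divided difference `f[X, X, y]` of `f t = t ^ (n + 1)`, i.e.
`∑ i < n, (i + 1) X ^ i y ^ (n - 1 - i)`. -/
def secondDivDiffPow : ℕ → ℝ → ℝ[X]
  | 0, _ => 0
  | n + 1, y => C (n + 1 : ℝ) * X ^ n + C y * secondDivDiffPow n y

theorem eval_secondDivDiffPow_succ (n : ℕ) (x y : ℝ) :
    (secondDivDiffPow (n + 1) y).eval x =
      (n + 1) * x ^ n + y * (secondDivDiffPow n y).eval x := by
  simp [secondDivDiffPow]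

theorem pow_succ_sub_pow_succ_eq (n : ℕ) (x y : ℝ) :
    x ^ (n + 1) - y ^ (n + 1) =
      (n + 1) * x ^ n * (x - y) - (secondDivDiffPow n y).eval x * (x - y) ^ 2 := by
  induction n with
  | zero => simp [secondDivDiffPow]
  | succ n ih =>
    rw [eval_secondDivDiffPow_succ]
    push_cast
    linear_combination y * ih

theorem eval_secondDivDiffPow_self (n : ℕ) (x : ℝ) :
    (secondDivDiffPow n x).eval x = n * (n + 1) / 2 * x ^ (n - 1) := by
  induction n with
  | zero => simp [secondDivDiffPow]
  | succ n ih =>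
    rw [eval_secondDivDiffPow_succ, ih]
    rcases n with _ | n
    · simp
    · simp only [Nat.add_sub_cancel]
      push_cast
      ring

theorem natDegree_secondDivDiffPow_le (n : ℕ) (y : ℝ) :
    (secondDivDiffPow n y).natDegree ≤ n - 1 := by
  induction n with
  | zero => simp [secondDivDiffPow]
  | succ n ih =>
    refine natDegree_add_le_of_degree_le ((natDegree_C_mul_X_pow_le _ _).trans (by omega)) ?_
    exact (natDegree_C_mul_le _ _).trans (ih.trans (by omega))

theorem sub_div_sq_eq_secondDivDiffPow {x y : ℝ} (hxy : x ≠ y) (m : ℕ) :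
    (1 - x ^ 2) / (x - y) ^ 2 * x ^ (m + 1) - (1 - y ^ 2) * y ^ (m + 1) / (x - y) ^ 2 =
      ((m + 1) * x ^ m - (m + 3) * x ^ (m + 2)) * (x - y)⁻¹ -
        ((secondDivDiffPow m y).eval x - (secondDivDiffPow (m + 2) y).eval x) := by
  have hd : x - y ≠ 0 := sub_ne_zero.mpr hxy
  calc (1 - x ^ 2) / (x - y) ^ 2 * x ^ (m + 1) - (1 - y ^ 2) * y ^ (m + 1) / (x - y) ^ 2
      = ((x ^ (m + 1) - y ^ (m + 1)) - (x ^ (m + 2 + 1) - y ^ (m + 2 + 1))) / (x - y) ^ 2 := by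
        ring
    _ = _ := by
        rw [pow_succ_sub_pow_succ_eq, pow_succ_sub_pow_succ_eq]
        field_simp
        push_cast
        ring

theorem stieltjes_boundary_identity {x s : ℝ} (h1 : 1 - x ≠ 0) (h2 : 1 + x ≠ 0)
    (hs : 2 * (1 - x ^ 2) * s = α - β + (α + β + 2) * x) (m : ℕ) :
    4 * ((m + 1) * x ^ m - (m + 3) * x ^ (m + 2)) * s +
        (2 * (α + 1) * ((1 + x) / (1 - x)) + 2 * (β + 1) * ((1 - x) / (1 + x))) * x ^ (m + 1) =
      2 * (m + 1) * (α - β) * x ^ m + 2 * (m + 2) * (α + β + 2) * x ^ (m + 1) := by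
  have hs' : s = (α - β + (α + β + 2) * x) / (2 * ((1 - x) * (1 + x))) := by
    rw [eq_div_iff (by positivity)]
    linear_combination hs
  subst hs'
  field_simp
  ring

section NodeMatrix

variable {ι : Type*} [Fintype ι] {z : ι → ℝ}

/-- The polynomial `p_k` of the statement, for `k = m + 2`. -/
def jacobiRemainder (α β : ℝ) (z : ι → ℝ) (m : ℕ) : ℝ[X] :=
  C (2 * (m + 1) * (α - β)) * X ^ m + C (2 * m * (m + 1) : ℝ) * X ^ (m - 1) +
    C 4 * ∑ j, (C (z j) * secondDivDiffPow (m + 1) (z j) - secondDivDiffPow m (z j))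

theorem natDegree_jacobiRemainder_le (m : ℕ) :
    (jacobiRemainder α β z m).natDegree ≤ m := by
  have hsum : (∑ j, (C (z j) * secondDivDiffPow (m + 1) (z j) -
      secondDivDiffPow m (z j))).natDegree ≤ m :=
    natDegree_sum_le_of_forall_le _ _ fun j _ => (natDegree_sub_le _ _).trans (max_le
      ((natDegree_C_mul_le _ _).trans (natDegree_secondDivDiffPow_le _ _))
      ((natDegree_secondDivDiffPow_le _ _).trans (by omega)))
  refine natDegree_add_le_of_degree_le (natDegree_add_le_of_degree_le ?_ ?_)
    ((natDegree_C_mul_le _ _).trans hsum)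
  · exact natDegree_C_mul_X_pow_le _ _
  · exact (natDegree_C_mul_X_pow_le _ _).trans (by omega)

variable [DecidableEq ι]

theorem eval_jacobiRemainder (i : ι) (m : ℕ) :
    2 * (m + 1) * (α - β) * z i ^ m + 2 * (m + 2) * (α + β + 2) * z i ^ (m + 1) -
        4 * ∑ j ∈ univ.erase i,
          ((secondDivDiffPow m (z j)).eval (z i) - (secondDivDiffPow (m + 2) (z j)).eval (z i)) =
      2 * (m + 2) * (2 * Fintype.card ι + α + β + 1 - (m + 2)) * z i ^ (m + 1) +
        (jacobiRemainder α β z m).eval (z i) := by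
  have hK (j : ι) : (secondDivDiffPow (m + 2) (z j)).eval (z i) =
      (m + 2) * z i ^ (m + 1) + z j * (secondDivDiffPow (m + 1) (z j)).eval (z i) := by
    rw [eval_secondDivDiffPow_succ]
    push_cast
    ring
  rw [sum_erase_eq_sub (mem_univ i), eval_secondDivDiffPow_self, eval_secondDivDiffPow_self]
  simp only [jacobiRemainder, hK, eval_add, eval_mul, eval_C, eval_pow, eval_X, eval_finsetSum,
    eval_sub, sum_sub_distrib, sum_add_distrib, sum_const, card_univ, nsmul_eq_mul]
  push_cast
  ring

def jacobiNodeMatrix (α β : ℝ) (z : ι → ℝ) : Matrix ι ι ℝ :=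
  Matrix.of fun i j =>
    if i = j then
      4 * (∑ l ∈ univ.erase j, (1 - z j ^ 2) / (z j - z l) ^ 2) +
        2 * (α + 1) * ((1 + z j) / (1 - z j)) + 2 * (β + 1) * ((1 - z j) / (1 + z j))
    else -4 * √((1 - z i ^ 2) * (1 - z j ^ 2)) / (z i - z j) ^ 2

theorem jacobiNodeMatrix_mulVec_mul_sqrt (hz : ∀ j, 0 ≤ 1 - z j ^ 2) (u : ι → ℝ) (i : ι) :
    (jacobiNodeMatrix α β z).mulVec (fun j => u j * √(1 - z j ^ 2)) i =
      (jacobiNodeMatrix α β z i i * u i -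
        4 * ∑ j ∈ univ.erase i, (1 - z j ^ 2) * u j / (z i - z j) ^ 2) * √(1 - z i ^ 2) := by
  have hoff : ∀ j ∈ univ.erase i, jacobiNodeMatrix α β z i j * (u j * √(1 - z j ^ 2)) =
      -(4 * ((1 - z j ^ 2) * u j / (z i - z j) ^ 2) * √(1 - z i ^ 2)) := by
    intro j hj
    simp only [jacobiNodeMatrix, Matrix.of_apply, if_neg (ne_of_mem_erase hj).symm,
      sqrt_mul (hz i)]
    linear_combination (-4 * √(1 - z i ^ 2) * u j / (z i - z j) ^ 2) * mul_self_sqrt (hz j)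
  rw [Matrix.mulVec, dotProduct, ← add_sum_erase _ _ (mem_univ i), sum_congr rfl hoff,
    sum_neg_distrib, ← sum_mul, ← mul_sum]
  ring

theorem jacobiNodeMatrix_mulVec_pow_mul_sqrt (hz : ∀ j, z j ∈ Set.Ioo (-1 : ℝ) 1)
    (hinj : Function.Injective z)
    (hstieltjes : ∀ i, 2 * (1 - z i ^ 2) * ∑ j ∈ univ.erase i, (z i - z j)⁻¹ =
      α - β + (α + β + 2) * z i) (m : ℕ) (i : ι) :
    (jacobiNodeMatrix α β z).mulVec (fun j => z j ^ (m + 1) * √(1 - z j ^ 2)) i =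
      (2 * (m + 2) * (2 * Fintype.card ι + α + β + 1 - (m + 2)) * z i ^ (m + 1) +
        (jacobiRemainder α β z m).eval (z i)) * √(1 - z i ^ 2) := by
  have hz2 (j : ι) : 0 ≤ 1 - z j ^ 2 := by nlinarith [(hz j).1, (hz j).2]
  rw [jacobiNodeMatrix_mulVec_mul_sqrt hz2, ← eval_jacobiRemainder,
    ← stieltjes_boundary_identity (by linarith [(hz i).2]) (by linarith [(hz i).1])
      (hstieltjes i)]
  congr 1
  have hterm : ∀ j ∈ univ.erase i,
      4 * ((1 - z i ^ 2) / (z i - z j) ^ 2 * z i ^ (m + 1) -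
        (1 - z j ^ 2) * z j ^ (m + 1) / (z i - z j) ^ 2) =
      4 * ((m + 1) * z i ^ m - (m + 3) * z i ^ (m + 2)) * (z i - z j)⁻¹ -
        4 * ((secondDivDiffPow m (z j)).eval (z i) -
          (secondDivDiffPow (m + 2) (z j)).eval (z i)) := fun j hj => by
    rw [sub_div_sq_eq_secondDivDiffPow (hinj.ne (ne_of_mem_erase hj).symm)]
    ring
  have hsum := sum_congr rfl hterm
  rw [sum_sub_distrib, ← mul_sum, ← mul_sum, ← mul_sum, sum_sub_distrib, ← sum_mul] at hsum
  rw [jacobiNodeMatrix, Matrix.of_apply, if_pos rfl]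
  linear_combination hsum

end NodeMatrix

end

theorem trig_jacobi_matrix_higher_eigenvector_step_general
    (N : ℕ) (α β : ℝ) (hα : -1 < α) (hβ : -1 < β)
    (P : Polynomial ℝ) (hPdeg : P.natDegree = N)
    (hPorth : ∀ Q : Polynomial ℝ, Q.natDegree < N →
      ∫ x in Set.Ioo (-1 : ℝ) 1,
        P.eval x * Q.eval x * (1 - x) ^ α * (1 + x) ^ β = 0)
    (z : Fin N → ℝ) (hzmono : StrictMono z)
    (hzroot : ∀ i, P.eval (z i) = 0)
    (hzmem : ∀ i, z i ∈ Set.Ioo (-1 : ℝ) 1)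
    (S : Matrix (Fin N) (Fin N) ℝ)
    (hS : S = Matrix.of fun i j =>
      if i = j then
        4 * (∑ l ∈ Finset.univ.erase j, (1 - z j ^ 2) / (z j - z l) ^ 2) +
          2 * (α + 1) * ((1 + z j) / (1 - z j)) + 2 * (β + 1) * ((1 - z j) / (1 + z j))
      else -4 * Real.sqrt ((1 - z i ^ 2) * (1 - z j ^ 2)) / (z i - z j) ^ 2)
    : ∀ k : ℕ, 2 ≤ k → k ≤ N →
      ∃ p : Polynomial ℝ, p.natDegree ≤ k - 2 ∧
        ∀ i : Fin N,
          S.mulVec (fun i => z i ^ (k - 1) * Real.sqrt (1 - z i ^ 2)) i =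
            (2 * (k : ℝ) * (2 * (N : ℝ) + α + β + 1 - (k : ℝ)) * z i ^ (k - 1) +
              p.eval (z i)) * Real.sqrt (1 - z i ^ 2) := by
  intro k hk _
  obtain ⟨m, rfl⟩ : ∃ m, k = m + 2 := ⟨k - 2, by omega⟩
  obtain rfl : S = jacobiNodeMatrix α β z := hS
  have hstieltjes := jacobi_stieltjes_relation hα hβ hPdeg hPorth hzmono.injective hzroot
  refine ⟨jacobiRemainder α β z m, natDegree_jacobiRemainder_le m, fun i => ?_⟩
  rw [show m + 2 - 1 = m + 1 from rfl,
    jacobiNodeMatrix_mulVec_pow_mul_sqrt hzmem hzmono.injective hstieltjes m i, Fintype.card_fin]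
  push_cast
  ring

theorem trig_jacobi_matrix_higher_eigenvector_step
    (N : ℕ) (hN : 1 ≤ N) (α β : ℝ) (hα : -1 < α) (hβ : -1 < β)
    (P : Polynomial ℝ) (hPdeg : P.natDegree = N)
    (hPorth : ∀ Q : Polynomial ℝ, Q.natDegree < N →
      ∫ x in Set.Ioo (-1 : ℝ) 1,
        P.eval x * Q.eval x * (1 - x) ^ α * (1 + x) ^ β = 0)
    (hPone : P.eval 1 = (∏ j ∈ Finset.range N, (α + 1 + j)) / (N.factorial : ℝ))
    (z : Fin N → ℝ) (hzmono : StrictMono z)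
    (hzroot : ∀ i, P.eval (z i) = 0)
    (hzmem : ∀ i, z i ∈ Set.Ioo (-1 : ℝ) 1)
    (S : Matrix (Fin N) (Fin N) ℝ)
    (hS : S = Matrix.of fun i j =>
      if i = j then
        4 * (∑ l ∈ Finset.univ.erase j, (1 - z j ^ 2) / (z j - z l) ^ 2) +
          2 * (α + 1) * ((1 + z j) / (1 - z j)) + 2 * (β + 1) * ((1 - z j) / (1 + z j))
      else -4 * Real.sqrt ((1 - z i ^ 2) * (1 - z j ^ 2)) / (z i - z j) ^ 2)
    : ∀ k : ℕ, 2 ≤ k → k ≤ N →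
      ∃ p : Polynomial ℝ, p.natDegree ≤ k - 2 ∧
        ∀ i : Fin N,
          S.mulVec (fun i => z i ^ (k - 1) * Real.sqrt (1 - z i ^ 2)) i =
            (2 * (k : ℝ) * (2 * (N : ℝ) + α + β + 1 - (k : ℝ)) * z i ^ (k - 1) +
              p.eval (z i)) * Real.sqrt (1 - z i ^ 2) :=
  trig_jacobi_matrix_higher_eigenvector_step_general N α β hα hβ P hPdeg hPorth z hzmono hzroot
    hzmem S hS
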